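/- arXiv:1611.00653 — 2 statements merged into one kernel-verified Lean document; each statement's English description precedes it below -/
import Mathlib

section
/- Let r > 0, let A be an n×n complex matrix, let ζ ∈ ℂ∖{0} and ξ ∈ ℂⁿ. Then F_r is twice real-Fréchet differentiable at ζ and H_{F_r}^A[ζ;ξ] = (r²/2)·|ζ|^{r−2}·Re( ⟨Aξ,ξ⟩ + (1 − 2/r)·e^{−2i·arg ζ}·⟨Aξ,ξ̄⟩ ). -/
open scoped BigOperators ComplexConjugate Matrix

noncomputable section

namespace Paper

/-- The sesquilinear pairing `⟨z,w⟩ = ∑ j, z j * conj (w j)` on `ℂⁿ`. -/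
def herm {n : ℕ} (z w : Fin n → ℂ) : ℂ := ∑ j, z j * conj (w j)

/-- Euclidean norm of a complex vector, `|z| = √⟨z,z⟩`. -/
def cnorm {n : ℕ} (z : Fin n → ℂ) : ℝ := Real.sqrt (herm z z).re

/-- Componentwise complex conjugate of a vector. -/
def vconj {n : ℕ} (z : Fin n → ℂ) : Fin n → ℂ := fun j => conj (z j)

/-- The ℝ-linear map `𝒥_p(α + iβ) = α/p + iβ/q`, where `1/p + 1/q = 1`,
i.e. `1/q = 1 - 1/p`. -/
def Jmap {n : ℕ} (p : ℝ) (ξ : Fin n → ℂ) : Fin n → ℂ :=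
  fun j => (((ξ j).re / p : ℝ) : ℂ) + Complex.I * (((ξ j).im * (1 - 1 / p) : ℝ) : ℂ)

/-- `Δ_p(A) = 2 · min { Re⟨Aξ, 𝒥_p ξ⟩ : ξ ∈ ℂⁿ, |ξ| = 1 }`. -/
def Deltap {n : ℕ} (p : ℝ) (A : Matrix (Fin n) (Fin n) ℂ) : ℝ :=
  sInf {t : ℝ | ∃ ξ : Fin n → ℂ, cnorm ξ = 1 ∧
    t = 2 * (herm (A.mulVec ξ) (Jmap p ξ)).re}

/-- `Δ_r(A) = min { Re⟨Aξ,ξ⟩ − |1 − 2/r|·|⟨Aξ,ξ̄⟩| : |ξ| = 1 }`, the extension of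
`Δ_p` to all `r > 0`. -/
def DeltaGen {n : ℕ} (r : ℝ) (A : Matrix (Fin n) (Fin n) ℂ) : ℝ :=
  sInf {t : ℝ | ∃ ξ : Fin n → ℂ, cnorm ξ = 1 ∧
    t = (herm (A.mulVec ξ) ξ).re - |1 - 2 / r| * ‖herm (A.mulVec ξ) (vconj ξ)‖}

/-- Membership in the class `𝒜_{λ,Λ}`:
`Re⟨Aξ,ξ⟩ ≥ λ|ξ|²` and `|⟨Aξ,η⟩| ≤ Λ|ξ||η|`. -/
def memA {n : ℕ} (lam Lam : ℝ) (A : Matrix (Fin n) (Fin n) ℂ) : Prop :=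
  (∀ ξ : Fin n → ℂ, lam * cnorm ξ ^ 2 ≤ (herm (A.mulVec ξ) ξ).re) ∧
  (∀ ξ η : Fin n → ℂ, ‖herm (A.mulVec ξ) η‖ ≤ Lam * cnorm ξ * cnorm η)

/-- `λ_A = min { Re⟨Aξ,ξ⟩ : |ξ| = 1 }`. -/
def lamA {n : ℕ} (A : Matrix (Fin n) (Fin n) ℂ) : ℝ :=
  sInf {t : ℝ | ∃ ξ : Fin n → ℂ, cnorm ξ = 1 ∧ t = (herm (A.mulVec ξ) ξ).re}

/-- `Λ_A = max { |⟨Aξ,η⟩| : |ξ| = |η| = 1 }`. -/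
def LamA {n : ℕ} (A : Matrix (Fin n) (Fin n) ℂ) : ℝ :=
  sSup {t : ℝ | ∃ ξ η : Fin n → ℂ, cnorm ξ = 1 ∧ cnorm η = 1 ∧
    t = ‖herm (A.mulVec ξ) η‖}

/-- `μ(A) = inf { Re⟨Aξ,ξ⟩/|⟨Aξ,ξ̄⟩| : ⟨Aξ,ξ̄⟩ ≠ 0 }`. -/
def muA {n : ℕ} (A : Matrix (Fin n) (Fin n) ℂ) : ℝ :=
  sInf {t : ℝ | ∃ ξ : Fin n → ℂ, herm (A.mulVec ξ) (vconj ξ) ≠ 0 ∧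
    t = (herm (A.mulVec ξ) ξ).re / ‖herm (A.mulVec ξ) (vconj ξ)‖}

/-- Second real Fréchet derivative of `F : ℂ → ℝ` at `ζ`, as a bilinear expression. -/
def D2 (F : ℂ → ℝ) (ζ : ℂ) (ξ η : ℂ) : ℝ := fderiv ℝ (fderiv ℝ F) ζ ξ η

/-- `F : ℂ → ℝ` is twice real-Fréchet differentiable at `ζ`. -/
def TwiceDiffAt (F : ℂ → ℝ) (ζ : ℂ) : Prop :=
  DifferentiableAt ℝ F ζ ∧ DifferentiableAt ℝ (fderiv ℝ F) ζ

/-- `H_F^A[ζ;ξ] = ∑ j, D²F(ζ)[ξ_j, (Aξ)_j]`. -/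
def HFA {n : ℕ} (F : ℂ → ℝ) (A : Matrix (Fin n) (Fin n) ℂ) (ζ : ℂ) (ξ : Fin n → ℂ) : ℝ :=
  ∑ j, D2 F ζ (ξ j) (A.mulVec ξ j)

/-- The power function `F_r(ζ) = |ζ|^r`. -/
def Fpow (r : ℝ) (ζ : ℂ) : ℝ := ‖ζ‖ ^ r

/-- Real dot product. -/
def rdot {n : ℕ} (u v : Fin n → ℝ) : ℝ := ∑ j, u j * v j

/-- Euclidean norm of a real vector. -/
def enorm {n : ℕ} (u : Fin n → ℝ) : ℝ := Real.sqrt (∑ j, u j ^ 2)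

/-- Operator norm `‖M‖ = max { |Mu| : |u| = 1 }` of a real matrix. -/
def opnormR {n : ℕ} (M : Matrix (Fin n) (Fin n) ℝ) : ℝ :=
  sSup {t : ℝ | ∃ u : Fin n → ℝ, enorm u = 1 ∧ t = enorm (M.mulVec u)}

/-- Symmetric part `M_s = (M + Mᵀ)/2`. -/
def symPart {n : ℕ} {R : Type*} [Field R] (M : Matrix (Fin n) (Fin n) R) :
    Matrix (Fin n) (Fin n) R := (2 : R)⁻¹ • (M + Mᵀ)

/-- Antisymmetric part `M_a = (M − Mᵀ)/2`. -/
def antiPart {n : ℕ} {R : Type*} [Field R] (M : Matrix (Fin n) (Fin n) R) :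
    Matrix (Fin n) (Fin n) R := (2 : R)⁻¹ • (M - Mᵀ)

/-- `𝒱_p(V) = ((p−2)/(2√(p−1)))·V_s + (p/(2√(p−1)))·V_a`. -/
def Vmap {n : ℕ} (p : ℝ) (V : Matrix (Fin n) (Fin n) ℝ) : Matrix (Fin n) (Fin n) ℝ :=
  ((p - 2) / (2 * Real.sqrt (p - 1))) • symPart V + (p / (2 * Real.sqrt (p - 1))) • antiPart V

/-- A real matrix is (symmetric) positive definite. -/
def RPosDef {n : ℕ} (M : Matrix (Fin n) (Fin n) ℝ) : Prop :=
  Mᵀ = M ∧ ∀ u : Fin n → ℝ, u ≠ 0 → 0 < rdot (M.mulVec u) u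

/-- The complex matrix `U + iV` built from two real matrices. -/
def cplx {n : ℕ} (U V : Matrix (Fin n) (Fin n) ℝ) : Matrix (Fin n) (Fin n) ℂ :=
  Matrix.of fun i j => ((U i j : ℂ) + Complex.I * (V i j : ℂ))

/-- `Φ : ℂ×ℂ → ℝ` is twice real-Fréchet differentiable at `v`. -/
def TwiceDiffAt2 (Φ : ℂ × ℂ → ℝ) (v : ℂ × ℂ) : Prop :=
  DifferentiableAt ℝ Φ v ∧ DifferentiableAt ℝ (fderiv ℝ Φ) v

/-- `H_Φ^{(A,B)}[v;ω] = ∑ j, D²Φ(v)[(ω₁ⱼ, ω₂ⱼ), ((Aω₁)ⱼ, (Bω₂)ⱼ)]`. -/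
def HAB {n : ℕ} (Φ : ℂ × ℂ → ℝ) (A B : Matrix (Fin n) (Fin n) ℂ) (v : ℂ × ℂ)
    (ω₁ ω₂ : Fin n → ℂ) : ℝ :=
  ∑ j, fderiv ℝ (fderiv ℝ Φ) v (ω₁ j, ω₂ j) (A.mulVec ω₁ j, B.mulVec ω₂ j)

/-- The Nazarov–Treil Bellman function `Q_{p,δ}` (with `q = p/(p−1)` passed explicitly). -/
def QNT (p q δ : ℝ) (ζ η : ℂ) : ℝ :=
  ‖ζ‖ ^ p + ‖η‖ ^ q +
    δ * (if ‖ζ‖ ^ p ≤ ‖η‖ ^ q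
      then ‖ζ‖ ^ (2 : ℝ) * ‖η‖ ^ (2 - q)
      else (2 / p) * ‖ζ‖ ^ p + (2 / q - 1) * ‖η‖ ^ q)

/-- `Δ_p` of a matrix-valued function on a subset `Ω ⊆ ℝᵐ`:
`2 · essinf_{x∈Ω} min_{|ξ|=1} Re⟨A(x)ξ, 𝒥_p ξ⟩`. -/
def DeltapAE {m n : ℕ} (p : ℝ) (A : (Fin m → ℝ) → Matrix (Fin n) (Fin n) ℂ)
    (Ω : Set (Fin m → ℝ)) : ℝ :=
  2 * essInf (fun x => sInf {t : ℝ | ∃ ξ : Fin n → ℂ, cnorm ξ = 1 ∧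
      t = (herm ((A x).mulVec ξ) (Jmap p ξ)).re}) (MeasureTheory.volume.restrict Ω)

end Paper

/-! Away from the origin `‖·‖ ^ r` is smooth on any real inner product space, with second
derivative `r (r - 2) ‖x‖ ^ (r - 4) ⟪x, u⟫ ⟪x, v⟫ + r ‖x‖ ^ (r - 2) ⟪u, v⟫`. On `ℂ`,
`⟪ζ, u⟫ = Re (u ζ̄)`, and `2 Re (u ζ̄) Re (v ζ̄) = |ζ|² Re (v ū) + Re (ζ̄² u v)` with
`ζ̄² = |ζ|² e^{-2i arg ζ}`; summing over the coordinates turns the two terms into `Re ⟨Aξ, ξ⟩`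
and `Re (e^{-2i arg ζ} ⟨Aξ, ξ̄⟩)`. -/

open scoped RealInnerProductSpace Topology

section

variable {E : Type*} [NormedAddCommGroup E] [InnerProductSpace ℝ E] {x : E}

theorem hasFDerivAt_norm_rpow_of_ne_zero (hx : x ≠ 0) (r : ℝ) :
    HasFDerivAt (fun y : E ↦ ‖y‖ ^ r) ((r * ‖x‖ ^ (r - 2)) • innerSL ℝ x) x := by
  have hsq : HasFDerivAt (fun y : E ↦ ‖y‖ ^ 2) (2 • innerSL ℝ x) x :=
    (hasStrictFDerivAt_norm_sq x).hasFDerivAt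
  have := hsq.rpow_const (p := r / 2) (Or.inl (by positivity))
  convert this using 1
  · ext y
    rw [← Real.rpow_natCast_mul (norm_nonneg _)]
    norm_num [mul_div_cancel₀]
  · rw [← Real.rpow_natCast_mul (norm_nonneg _), two_smul, smul_add, ← add_smul]
    congr 1
    push_cast
    ring_nf

theorem fderiv_norm_rpow_eventuallyEq (hx : x ≠ 0) (r : ℝ) :
    fderiv ℝ (fun y : E ↦ ‖y‖ ^ r) =ᶠ[𝓝 x] fun y ↦ (r * ‖y‖ ^ (r - 2)) • innerSL ℝ y :=
  (eventually_ne_nhds hx).mono fun _ hy ↦ (hasFDerivAt_norm_rpow_of_ne_zero hy r).fderiv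

theorem differentiableAt_fderiv_norm_rpow (hx : x ≠ 0) (r : ℝ) :
    DifferentiableAt ℝ (fderiv ℝ fun y : E ↦ ‖y‖ ^ r) x :=
  ((hasFDerivAt_norm_rpow_of_ne_zero hx (r - 2)).const_mul r).smul
    (innerSL ℝ).hasFDerivAt |>.differentiableAt
    |>.congr_of_eventuallyEq (fderiv_norm_rpow_eventuallyEq hx r)

theorem fderiv_fderiv_norm_rpow_apply (hx : x ≠ 0) (r : ℝ) (u v : E) :
    fderiv ℝ (fderiv ℝ fun y : E ↦ ‖y‖ ^ r) x u v =
      r * (r - 2) * ‖x‖ ^ (r - 4) * (⟪x, u⟫ * ⟪x, v⟫) + r * ‖x‖ ^ (r - 2) * ⟪u, v⟫ := by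
  rw [(fderiv_norm_rpow_eventuallyEq hx r).fderiv_eq,
    HasFDerivAt.fderiv (f := fun y ↦ (r * ‖y‖ ^ (r - 2)) • innerSL ℝ y)
      (((hasFDerivAt_norm_rpow_of_ne_zero hx (r - 2)).const_mul r).smul
        (innerSL ℝ).hasFDerivAt)]
  simp only [add_apply, smul_apply, ContinuousLinearMap.smulRight_apply, innerSL_apply_apply,
    smul_eq_mul]
  -- `(innerSL ℝ).hasFDerivAt` sees `innerSL ℝ` as `ℝ`-linear, so only `erw` unfolds it here
  erw [innerSL_apply_apply]
  ring_nf
end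

namespace Complex

theorem re_mul_conj_mul_re_mul_conj (a b ζ : ℂ) :
    (a * conj ζ).re * (b * conj ζ).re =
      (normSq ζ * (b * conj a).re + (conj ζ ^ 2 * (a * b)).re) / 2 := by
  simp only [mul_re, mul_im, conj_re, conj_im, normSq_apply, sq]
  ring

theorem conj_sq_eq_normSq_mul_exp (ζ : ℂ) :
    conj ζ ^ 2 = normSq ζ * exp (-2 * (ζ.arg : ℂ) * I) := by
  conv_lhs => rw [← norm_mul_exp_arg_mul_I ζ]
  rw [map_mul, conj_ofReal, ← exp_conj, map_mul, conj_ofReal, conj_I, mul_pow, ← exp_nat_mul,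
    ← ofReal_pow, ← normSq_eq_norm_sq]
  push_cast
  ring_nf

end Complex

namespace Paper

theorem re_herm_eq_sum_inner {n : ℕ} (z w : Fin n → ℂ) :
    (herm z w).re = ∑ j, ⟪w j, z j⟫ := by
  simp only [herm, Complex.re_sum, Complex.inner]

theorem herm_vconj {n : ℕ} (z w : Fin n → ℂ) : herm z (vconj w) = ∑ j, z j * w j := by
  simp only [herm, vconj, Complex.conj_conj]

theorem sum_inner_mul_inner {n : ℕ} (ζ : ℂ) (ξ η : Fin n → ℂ) :
    ∑ j, ⟪ζ, ξ j⟫ * ⟪ζ, η j⟫ =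
      (Complex.normSq ζ * (herm η ξ).re + (conj ζ ^ 2 * herm η (vconj ξ)).re) / 2 := by
  rw [re_herm_eq_sum_inner, herm_vconj, Finset.mul_sum, Finset.mul_sum, Complex.re_sum,
    ← Finset.sum_add_distrib, Finset.sum_div]
  refine Finset.sum_congr rfl fun j _ ↦ ?_
  simp only [Complex.inner, Complex.re_mul_conj_mul_re_mul_conj, mul_comm (ξ j) (η j)]

theorem twiceDiffAt_Fpow (r : ℝ) {ζ : ℂ} (hζ : ζ ≠ 0) : TwiceDiffAt (Fpow r) ζ :=
  ⟨(hasFDerivAt_norm_rpow_of_ne_zero hζ r).differentiableAt, differentiableAt_fderiv_norm_rpow hζ r⟩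

theorem HFA_Fpow {n : ℕ} (r : ℝ) (A : Matrix (Fin n) (Fin n) ℂ) {ζ : ℂ} (hζ : ζ ≠ 0)
    (ξ : Fin n → ℂ) :
    HFA (Fpow r) A ζ ξ =
      r * (r - 2) * ‖ζ‖ ^ (r - 4) * ((Complex.normSq ζ * (herm (A *ᵥ ξ) ξ).re +
          (conj ζ ^ 2 * herm (A *ᵥ ξ) (vconj ξ)).re) / 2) +
        r * ‖ζ‖ ^ (r - 2) * (herm (A *ᵥ ξ) ξ).re :=
  calc HFA (Fpow r) A ζ ξ
      = ∑ j, (r * (r - 2) * ‖ζ‖ ^ (r - 4) * (⟪ζ, ξ j⟫ * ⟪ζ, (A *ᵥ ξ) j⟫) +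
          r * ‖ζ‖ ^ (r - 2) * ⟪ξ j, (A *ᵥ ξ) j⟫) :=
        Finset.sum_congr rfl fun j _ ↦ fderiv_fderiv_norm_rpow_apply hζ r _ _
    _ = _ := by
        rw [Finset.sum_add_distrib, ← Finset.mul_sum, ← Finset.mul_sum, sum_inner_mul_inner,
          ← re_herm_eq_sum_inner]

end Paper

theorem statement2_general (n : ℕ) (r : ℝ) (A : Matrix (Fin n) (Fin n) ℂ)
    (ζ : ℂ) (hζ : ζ ≠ 0) (ξ : Fin n → ℂ) :
    Paper.TwiceDiffAt (Paper.Fpow r) ζ ∧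
    Paper.HFA (Paper.Fpow r) A ζ ξ =
      (r ^ 2 / 2) * ‖ζ‖ ^ (r - 2) *
        (Paper.herm (A.mulVec ξ) ξ
          + ((1 - 2 / r : ℝ) : ℂ) * Complex.exp (-2 * (ζ.arg : ℂ) * Complex.I)
            * Paper.herm (A.mulVec ξ) (Paper.vconj ξ)).re := by
  refine ⟨Paper.twiceDiffAt_Fpow r hζ, ?_⟩
  have hpow : ‖ζ‖ ^ (r - 4) * Complex.normSq ζ = ‖ζ‖ ^ (r - 2) := by
    rw [Complex.normSq_eq_norm_sq, ← Real.rpow_natCast, ← Real.rpow_add (norm_pos_iff.2 hζ)]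
    ring_nf
  have hr : r ^ 2 * (1 - 2 / r) = r * (r - 2) := by
    rcases eq_or_ne r 0 with rfl | hr0
    · simp
    · field_simp
  set e := Complex.exp (-2 * (ζ.arg : ℂ) * Complex.I)
  rw [Paper.HFA_Fpow r A hζ, Complex.conj_sq_eq_normSq_mul_exp, mul_assoc (Complex.normSq ζ : ℂ),
    Complex.re_ofReal_mul, Complex.add_re, mul_assoc ((1 - 2 / r : ℝ) : ℂ), Complex.re_ofReal_mul]
  linear_combination
    (r * (r - 2) / 2 * ((Paper.herm (A *ᵥ ξ) ξ).re + (e * Paper.herm (A *ᵥ ξ) (Paper.vconj ξ)).re))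
      * hpow - (‖ζ‖ ^ (r - 2) * (e * Paper.herm (A *ᵥ ξ) (Paper.vconj ξ)).re / 2) * hr

/-- `H_{F_r}^A[ζ;ξ] = (r²/2)|ζ|^{r−2} Re(⟨Aξ,ξ⟩ + (1−2/r) e^{−2i·arg ζ} ⟨Aξ,ξ̄⟩)`. -/
theorem statement2 (n : ℕ) (r : ℝ) (hr : 0 < r) (A : Matrix (Fin n) (Fin n) ℂ)
    (ζ : ℂ) (hζ : ζ ≠ 0) (ξ : Fin n → ℂ) :
    Paper.TwiceDiffAt (Paper.Fpow r) ζ ∧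
    Paper.HFA (Paper.Fpow r) A ζ ξ =
      (r ^ 2 / 2) * ‖ζ‖ ^ (r - 2) *
        (Paper.herm (A.mulVec ξ) ξ
          + ((1 - 2 / r : ℝ) : ℂ) * Complex.exp (-2 * (ζ.arg : ℂ) * Complex.I)
            * Paper.herm (A.mulVec ξ) (Paper.vconj ξ)).re :=
  statement2_general n r A ζ hζ ξ
end
end

section
/- Let 0 < λ ≤ Λ and let A be an n×n complex matrix belonging to 𝒜_{λ,Λ}, and set Λ_A := max{ |⟨Aξ,η⟩| : |ξ| = |η| = 1 }. Then the function p ↦ Δ_p(A) is nonincreasing on [2,∞), and it is Lipschitz there: |Δ_p(A) − Δ_{p'}(A)| ≤ (Λ_A/2)·|p − p'| for all p, p' ∈ [2,∞). -/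
open scoped BigOperators ComplexConjugate Matrix

noncomputable section

/-! Expanding `𝒥_p` gives `2 Re⟨Aξ, 𝒥_p ξ⟩ = Re⟨Aξ, ξ⟩ + (2/p - 1) Re⟨Aξ, ξ̄⟩`. For fixed `ξ` this
moves with `p` by `|2/p - 2/p'| |Re⟨Aξ, ξ̄⟩| ≤ (|p - p'|/2) Λ_A` when `p, p' ≥ 2`, and the bound passes
to the infimum. Replacing `ξ` by `uξ` with `|u| = 1` keeps `|ξ|` and `⟨Aξ, ξ⟩` but multiplies
`⟨Aξ, ξ̄⟩` by `u²`, so only unit vectors with `⟨Aξ, ξ̄⟩ ≥ 0` matter for the infimum; for those the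
coefficient `2/p - 1 ≤ 0` decreases with `p`, which gives monotonicity. -/

theorem sInf_le_sInf_add_of_forall_exists_le {ι : Type*} {P : ι → Prop} {f g : ι → ℝ} {c : ℝ}
    (hc : 0 ≤ c) (hf : BddBelow {t | ∃ x, P x ∧ t = f x})
    (h : ∀ x, P x → ∃ y, P y ∧ f y ≤ g x + c) :
    sInf {t | ∃ x, P x ∧ t = f x} ≤ sInf {t | ∃ x, P x ∧ t = g x} + c := by
  by_cases hP : ∃ x, P x
  · obtain ⟨x₀, hx₀⟩ := hP
    rw [← sub_le_iff_le_add]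
    refine le_csInf ⟨_, x₀, hx₀, rfl⟩ ?_
    rintro _ ⟨x, hx, rfl⟩
    obtain ⟨y, hy, hle⟩ := h x hx
    linarith [csInf_le hf ⟨y, hy, rfl⟩]
  · have hempty : ∀ k : ι → ℝ, {t | ∃ x, P x ∧ t = k x} = ∅ := fun k =>
      Set.eq_empty_iff_forall_notMem.2 fun _ ⟨x, hx, _⟩ => hP ⟨x, hx⟩
    simpa [hempty, Real.sInf_empty] using hc

theorem Complex.exists_norm_eq_one_sq_mul_eq_norm (z : ℂ) :
    ∃ u : ℂ, ‖u‖ = 1 ∧ u ^ 2 * z = ‖z‖ := by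
  rcases eq_or_ne z 0 with rfl | hz
  · exact ⟨1, by simp, by simp⟩
  obtain ⟨u, hu⟩ := IsAlgClosed.exists_pow_nat_eq ((‖z‖ : ℂ) / z) two_pos
  have hu_sq : ‖u‖ ^ 2 = 1 := by
    rw [← norm_pow, hu, norm_div, Complex.norm_real, norm_norm, div_self (norm_ne_zero_iff.2 hz)]
  refine ⟨u, ?_, by rw [hu, div_mul_cancel₀ _ hz]⟩
  nlinarith [norm_nonneg u]

theorem abs_two_div_sub_two_div_le {p p' : ℝ} (hp : 2 ≤ p) (hp' : 2 ≤ p') :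
    |2 / p - 2 / p'| ≤ |p - p'| / 2 := by
  have hpp' : 4 ≤ p * p' := by nlinarith
  have hnum : |2 * p' - p * 2| = 2 * |p - p'| := by
    rw [show 2 * p' - p * 2 = -2 * (p - p') by ring, abs_mul]
    norm_num
  rw [div_sub_div _ _ (by positivity) (by positivity), abs_div,
    abs_of_pos (by positivity : 0 < p * p'), div_le_div_iff₀ (by positivity) two_pos, hnum]
  nlinarith [abs_nonneg (p - p')]

namespace Paper

variable {n : ℕ}

theorem herm_smul_smul (u v : ℂ) (ξ η : Fin n → ℂ) :
    herm (u • ξ) (v • η) = u * conj v * herm ξ η := by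
  simp only [herm, Finset.mul_sum, Pi.smul_apply, smul_eq_mul, map_mul]
  exact Finset.sum_congr rfl fun _ _ => by ring

theorem vconj_smul (u : ℂ) (ξ : Fin n → ℂ) : vconj (u • ξ) = conj u • vconj ξ := by
  ext j
  simp [vconj]

theorem cnorm_smul_of_norm_eq_one {u : ℂ} (hu : ‖u‖ = 1) (ξ : Fin n → ℂ) :
    cnorm (u • ξ) = cnorm ξ := by
  rw [cnorm, cnorm, herm_smul_smul, Complex.mul_conj, Complex.normSq_eq_norm_sq, hu]
  simp

theorem cnorm_vconj (ξ : Fin n → ℂ) : cnorm (vconj ξ) = cnorm ξ := by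
  simp only [cnorm, herm, vconj, Complex.conj_conj]
  congr 2
  exact Finset.sum_congr rfl fun _ _ => mul_comm _ _

theorem two_mul_re_herm_Jmap {p : ℝ} (hp : p ≠ 0) (w ξ : Fin n → ℂ) :
    2 * (herm w (Jmap p ξ)).re = (herm w ξ).re + (2 / p - 1) * (herm w (vconj ξ)).re := by
  simp only [herm, Jmap, vconj, Complex.re_sum, Finset.mul_sum, ← Finset.sum_add_distrib]
  refine Finset.sum_congr rfl fun j _ => ?_
  simp only [Complex.mul_re, map_add, map_mul, Complex.conj_I, Complex.conj_ofReal,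
    Complex.conj_conj, Complex.add_re, Complex.add_im, Complex.mul_im, Complex.ofReal_re,
    Complex.ofReal_im, Complex.neg_re, Complex.neg_im, Complex.I_re, Complex.I_im,
    Complex.conj_re, Complex.conj_im]
  field_simp
  ring

theorem LamA_nonneg (A : Matrix (Fin n) (Fin n) ℂ) : 0 ≤ LamA A :=
  Real.sSup_nonneg fun _ ⟨_, _, _, _, ht⟩ => ht ▸ norm_nonneg _

section Bounded

variable {Lam : ℝ} {A : Matrix (Fin n) (Fin n) ℂ}
  (hA : ∀ ξ η : Fin n → ℂ, ‖herm (A.mulVec ξ) η‖ ≤ Lam * cnorm ξ * cnorm η)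
include hA

theorem norm_herm_mulVec_le_LamA {ξ η : Fin n → ℂ} (hξ : cnorm ξ = 1) (hη : cnorm η = 1) :
    ‖herm (A.mulVec ξ) η‖ ≤ LamA A := by
  refine le_csSup ⟨Lam, ?_⟩ ⟨ξ, η, hξ, hη, rfl⟩
  rintro _ ⟨ξ', η', hξ', hη', rfl⟩
  simpa [hξ', hη'] using hA ξ' η'

theorem bddBelow_Deltap_set {p : ℝ} (hp : p ≠ 0) :
    BddBelow {t | ∃ ξ : Fin n → ℂ, cnorm ξ = 1 ∧ t = 2 * (herm (A.mulVec ξ) (Jmap p ξ)).re} := by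
  refine ⟨-((1 + |2 / p - 1|) * LamA A), ?_⟩
  rintro _ ⟨ξ, hξ, rfl⟩
  have hre := (Complex.abs_re_le_norm _).trans (norm_herm_mulVec_le_LamA hA hξ hξ)
  have hconj := (Complex.abs_re_le_norm _).trans
    (norm_herm_mulVec_le_LamA hA hξ ((cnorm_vconj ξ).trans hξ))
  have hshift : |(2 / p - 1) * (herm (A.mulVec ξ) (vconj ξ)).re| ≤ |2 / p - 1| * LamA A := by
    rw [abs_mul]
    exact mul_le_mul_of_nonneg_left hconj (abs_nonneg _)
  rw [two_mul_re_herm_Jmap hp]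
  linarith [abs_le.1 hre, abs_le.1 hshift]

theorem Deltap_le_of_le {p p' : ℝ} (hp : 2 ≤ p) (hpp' : p ≤ p') : Deltap p' A ≤ Deltap p A := by
  have hp' : 2 ≤ p' := hp.trans hpp'
  have key := sInf_le_sInf_add_of_forall_exists_le le_rfl
    (bddBelow_Deltap_set hA (by positivity : p' ≠ 0))
    (g := fun ξ => 2 * (herm (A.mulVec ξ) (Jmap p ξ)).re) ?_
  · simpa [Deltap] using key
  intro ξ hξ
  obtain ⟨u, hu, hu_sq⟩ :=
    Complex.exists_norm_eq_one_sq_mul_eq_norm (herm (A.mulVec ξ) (vconj ξ))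
  have hu_conj : u * conj u = 1 := by
    rw [Complex.mul_conj, Complex.normSq_eq_norm_sq, hu]; norm_num
  refine ⟨u • ξ, (cnorm_smul_of_norm_eq_one hu ξ).trans hξ, ?_⟩
  simp only [two_mul_re_herm_Jmap (by positivity : p' ≠ 0), two_mul_re_herm_Jmap
    (by positivity : p ≠ 0), Matrix.mulVec_smul, vconj_smul, herm_smul_smul, hu_conj, one_mul,
    Complex.conj_conj, ← sq, hu_sq, Complex.ofReal_re, add_zero]
  have h2p : 2 / p ≤ 1 := by rw [div_le_one (by positivity)]; exact hp
  have h2p' : 2 / p' ≤ 2 / p := div_le_div_of_nonneg_left zero_le_two (by positivity) hpp'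
  have h₁ := mul_le_mul_of_nonneg_right (sub_le_sub_right h2p' 1)
    (norm_nonneg (herm (A.mulVec ξ) (vconj ξ)))
  have h₂ := mul_le_mul_of_nonpos_left (Complex.re_le_norm (herm (A.mulVec ξ) (vconj ξ)))
    (sub_nonpos.2 h2p)
  linarith

theorem Deltap_le_add {p p' : ℝ} (hp : 2 ≤ p) (hp' : 2 ≤ p') :
    Deltap p A ≤ Deltap p' A + LamA A / 2 * |p - p'| := by
  have key := sInf_le_sInf_add_of_forall_exists_le
    (mul_nonneg (div_nonneg (LamA_nonneg A) zero_le_two) (abs_nonneg (p - p')))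
    (bddBelow_Deltap_set hA (by positivity : p ≠ 0))
    (g := fun ξ => 2 * (herm (A.mulVec ξ) (Jmap p' ξ)).re) ?_
  · simpa [Deltap] using key
  intro ξ hξ
  refine ⟨ξ, hξ, ?_⟩
  rw [two_mul_re_herm_Jmap (by positivity), two_mul_re_herm_Jmap (by positivity)]
  have hconj := (Complex.abs_re_le_norm _).trans
    (norm_herm_mulVec_le_LamA hA hξ ((cnorm_vconj ξ).trans hξ))
  have hshift : (2 / p - 2 / p') * (herm (A.mulVec ξ) (vconj ξ)).re ≤ |p - p'| / 2 * LamA A :=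
    calc (2 / p - 2 / p') * (herm (A.mulVec ξ) (vconj ξ)).re
        ≤ |2 / p - 2 / p'| * |(herm (A.mulVec ξ) (vconj ξ)).re| := by
          rw [← abs_mul]; exact le_abs_self _
      _ ≤ |p - p'| / 2 * LamA A :=
          mul_le_mul (abs_two_div_sub_two_div_le hp hp') hconj (abs_nonneg _) (by positivity)
  linarith

end Bounded

end Paper

theorem statement9_general (n : ℕ) (lam Lam : ℝ)
    (A : Matrix (Fin n) (Fin n) ℂ) (hA : Paper.memA lam Lam A) :
    (∀ p p' : ℝ, 2 ≤ p → p ≤ p' → Paper.Deltap p' A ≤ Paper.Deltap p A) ∧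
    (∀ p p' : ℝ, 2 ≤ p → 2 ≤ p' →
      |Paper.Deltap p A - Paper.Deltap p' A| ≤ (Paper.LamA A / 2) * |p - p'|) := by
  refine ⟨fun p p' hp hpp' => Paper.Deltap_le_of_le hA.2 hp hpp', fun p p' hp hp' => ?_⟩
  have h₁ := Paper.Deltap_le_add hA.2 hp hp'
  have h₂ := Paper.Deltap_le_add hA.2 hp' hp
  rw [abs_sub_comm p' p] at h₂
  exact abs_sub_le_iff.2 ⟨by linarith, by linarith⟩

/-- `p ↦ Δ_p(A)` is nonincreasing on `[2,∞)` and Lipschitz there with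
constant `Λ_A/2`. -/
theorem statement9 (n : ℕ) (lam Lam : ℝ) (hlam : 0 < lam) (hLam : lam ≤ Lam)
    (A : Matrix (Fin n) (Fin n) ℂ) (hA : Paper.memA lam Lam A) :
    (∀ p p' : ℝ, 2 ≤ p → p ≤ p' → Paper.Deltap p' A ≤ Paper.Deltap p A) ∧
    (∀ p p' : ℝ, 2 ≤ p → 2 ≤ p' →
      |Paper.Deltap p A - Paper.Deltap p' A| ≤ (Paper.LamA A / 2) * |p - p'|) :=
  statement9_general n lam Lam A hA
end
end
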